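/- arXiv:2412.04145 — 2 statements merged into one kernel-verified Lean document; each statement's English description precedes it below -/
import Mathlib

section
/- Let G be a graph of maximum degree α, and let S ⊆ V(G) be such that G[S] is connected and S contains exactly k vertices whose degree in G is at least 3. Then the number of vertices of S having a neighbor outside of S is at most (2α)^{k+1}. -/
/-!
A boundary vertex of `S` of degree at most two in `G` has degree at most one in `G[S]`.
Since `G[S]` is connected it has at least `|S| - 1` edges, so its degrees sum to at least
`2|S| - 2`; hence the vertices of degree at most one in `G[S]` number at most
`2 + ∑ (deg v - 2) ≤ 2 + (α - 2) k`, the sum running over the vertices of degree at least three.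
Together with those `k` vertices this gives at most `(α - 1) k + 2 ≤ (2α)^(k+1)` boundary vertices.
-/

open Finset

namespace SimpleGraph

variable {V : Type*}

theorem ncard_neighborSet_eq_degree (G : SimpleGraph V) (v : V) [Fintype (G.neighborSet v)] :
    (G.neighborSet v).ncard = G.degree v := by
  rw [Set.ncard_eq_toFinset_card']
  rfl

variable [Fintype V]

theorem degree_induce_le (G : SimpleGraph V) [DecidableRel G.Adj] {s : Set V}
    [DecidablePred (· ∈ s)] (v : s) : (G.induce s).degree v ≤ G.degree v := by
  classical
  rw [← card_neighborFinset_eq_degree, ← card_map, map_neighborFinset_induce]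
  exact card_le_card inter_subset_left

theorem degree_induce_lt (G : SimpleGraph V) [DecidableRel G.Adj] {s : Set V}
    [DecidablePred (· ∈ s)] {v : s} (h : ∃ y ∉ s, G.Adj v y) :
    (G.induce s).degree v < G.degree v := by
  classical
  obtain ⟨y, hys, hvy⟩ := h
  rw [← card_neighborFinset_eq_degree, ← card_map, map_neighborFinset_induce]
  exact card_lt_card <| (ssubset_iff_of_subset inter_subset_left).2 ⟨y, by simpa, by simp [hys]⟩

theorem Connected.card_degree_le_one_le {G : SimpleGraph V} [DecidableRel G.Adj]
    (hG : G.Connected) {α : ℕ} (hΔ : ∀ v, G.degree v ≤ α) :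
    #{v | G.degree v ≤ 1} ≤ (α - 2) * #{v | 3 ≤ G.degree v} + 2 := by
  have hpointwise : ∀ v, G.degree v + (if G.degree v ≤ 1 then 1 else 0) ≤
      2 + (if 3 ≤ G.degree v then α - 2 else 0) := by
    intro v
    have := hΔ v
    split_ifs <;> omega
  have hsum := sum_le_sum fun v (_ : v ∈ univ) ↦ hpointwise v
  simp only [sum_add_distrib, sum_degrees_eq_twice_card_edges, ← sum_filter, sum_const,
    smul_eq_mul, card_univ] at hsum
  have hedges : Fintype.card V ≤ #G.edgeFinset + 1 := by
    have := hG.card_vert_le_card_edgeSet_add_one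
    rwa [Nat.card_eq_fintype_card, Nat.card_eq_fintype_card, ← edgeFinset_card] at this
  linarith

end SimpleGraph

theorem Set.ncard_sep_eq_card_filter {V : Type*} (S : Set V) [Fintype S] (p : V → Prop)
    [DecidablePred p] : {x ∈ S | p x}.ncard = #{v : S | p v} := by
  rw [← Set.ncard_coe_finset, ← Set.ncard_image_of_injective _ Subtype.val_injective]
  congr 1
  ext x
  simp [and_comm]

theorem mul_add_two_le_two_mul_pow_succ {α : ℕ} (hα : 1 ≤ α) (k : ℕ) :
    α * k + 2 ≤ (2 * α) ^ (k + 1) :=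
  calc α * k + 2 ≤ (k + 2) * α := by nlinarith
    _ ≤ 2 ^ (k + 1) * α ^ (k + 1) := by
      gcongr
      · exact Nat.lt_two_pow_self
      · exact Nat.le_self_pow (by omega) α
    _ = (2 * α) ^ (k + 1) := (mul_pow 2 α (k + 1)).symm

/-- Let `G` be a (finite) graph of maximum degree `α`, and let `S ⊆ V(G)`
be such that `G[S]` is connected and `S` contains exactly `k` vertices whose degree in `G`
is at least `3`.  Then the number of vertices of `S` having a neighbor outside of `S` is at
most `(2α)^{k+1}`. -/
theorem boundary_vertices_le {V : Type*} [Fintype V] (G : SimpleGraph V) (α k : ℕ)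
    (hdeg : ∀ v : V, (G.neighborSet v).ncard ≤ α)
    (S : Set V) (hconn : (G.induce S).Connected)
    (hk : {v ∈ S | 3 ≤ (G.neighborSet v).ncard}.ncard = k) :
    {x ∈ S | ∃ y ∉ S, G.Adj x y}.ncard ≤ (2 * α) ^ (k + 1) := by
  classical
  rcases Set.eq_empty_or_nonempty {x ∈ S | ∃ y ∉ S, G.Adj x y} with hempty | ⟨x, -, y, -, hxy⟩
  · simp [hempty]
  simp only [SimpleGraph.ncard_neighborSet_eq_degree] at hdeg hk
  have hα : 1 ≤ α := (G.degree_pos_iff_exists_adj x).2 ⟨y, hxy⟩ |>.trans_le (hdeg x)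
  rw [Set.ncard_sep_eq_card_filter] at hk ⊢
  have hleaves := hconn.card_degree_le_one_le fun v ↦ (G.degree_induce_le v).trans (hdeg v)
  have hhigh : #{v : S | 3 ≤ (G.induce S).degree v} ≤ k :=
    hk ▸ card_le_card (monotone_filter_right _ fun v _ h ↦ h.trans (G.degree_induce_le v))
  have hboundary : #{v : S | ∃ y ∉ S, G.Adj v y} ≤ k + #{v | (G.induce S).degree v ≤ 1} := by
    rw [← hk]
    refine (card_le_card fun v hv ↦ ?_).trans (card_union_le _ _)
    have := G.degree_induce_lt (mem_filter.1 hv).2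
    simp only [mem_union, mem_filter, mem_univ, true_and]
    omega
  calc _ ≤ k + ((α - 2) * k + 2) := by grw [hboundary, hleaves, hhigh]
    _ = (α - 2 + 1) * k + 2 := by ring
    _ ≤ α * k + 2 := by gcongr; omega
    _ ≤ _ := mul_add_two_le_two_mul_pow_succ hα k
end

section
/- Let G be the graph obtained from the k×k grid by adding two universal vertices x, y, let A, B be the grid's bipartition classes, and Z₁ := A ∪ {x}. Then G[Z₁ \ {x}] = G[A] has no edges, so G/(Z₁ \ {x}) is isomorphic to G, and hence tw(G/(Z₁ \ {x})) ≥ k. In particular, removing a single vertex from a contraction set can increase the treewidth of the contracted graph from 2 to at least k. -/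
/-- A rooted tree decomposition of a graph `G`.  The rooted tree on the index type `ι` is
given by a parent function together with a root which every node reaches by iterating
`parent`.  The bags satisfy the usual covering, edge and (subtree-)connectivity axioms;
the connectivity axiom is phrased for rooted trees: if `v` lies in the bag of `t` but not
in the bag of its parent (and `t` is not the root), then every node whose bag contains `v`
is a descendant of `t`. -/
structure RootedTreeDecomp (V : Type*) (ι : Type*) (G : SimpleGraph V) where
  parent : ι → ι
  root : ι
  parent_root : parent root = root
  reaches_root : ∀ t : ι, ∃ n : ℕ, parent^[n] t = root
  bag : ι → Set V
  bag_cover : ∀ v : V, ∃ t : ι, v ∈ bag t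
  bag_edge : ∀ ⦃u v : V⦄, G.Adj u v → ∃ t : ι, u ∈ bag t ∧ v ∈ bag t
  bag_conn : ∀ (v : V) (t : ι), v ∈ bag t → t ≠ root → v ∉ bag (parent t) →
      ∀ s : ι, v ∈ bag s → ∃ n : ℕ, parent^[n] s = t

namespace RootedTreeDecomp

variable {V ι : Type*} {G : SimpleGraph V}

open Classical

/-- The adhesion `σ(t) = β(t) ∩ β(parent t)`, with `σ(root) = ∅`. -/
noncomputable def adhesion (D : RootedTreeDecomp V ι G) (t : ι) : Set V :=
  if t = D.root then ∅ else D.bag t ∩ D.bag (D.parent t)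

/-- `s` is a child of `t` in the rooted tree. -/
def IsChild (D : RootedTreeDecomp V ι G) (s t : ι) : Prop :=
  s ≠ D.root ∧ D.parent s = t

/-- The set `γ(t)`: the union of the bags over the subtree rooted at `t`. -/
def subtreeBags (D : RootedTreeDecomp V ι G) (t : ι) : Set V :=
  ⋃ s ∈ {s : ι | ∃ n : ℕ, D.parent^[n] s = t}, D.bag s

/-- The torso of a node `t`: the graph on the bag `β(t)` (as a graph with vertex set `V`,
with all edges inside `β(t)`) obtained from `G[β(t)]` by making the adhesion `σ(s)` of every
child `s` of `t` into a clique. -/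
def torso (D : RootedTreeDecomp V ι G) (t : ι) : SimpleGraph V where
  Adj u v := u ≠ v ∧ u ∈ D.bag t ∧ v ∈ D.bag t ∧
    (G.Adj u v ∨ ∃ s : ι, D.IsChild s t ∧ u ∈ D.adhesion s ∧ v ∈ D.adhesion s)
  symm := by
    constructor
    rintro u v ⟨hne, hu, hv, h⟩
    refine ⟨hne.symm, hv, hu, ?_⟩
    rcases h with h | ⟨s, hs, h1, h2⟩
    · exact Or.inl h.symm
    · exact Or.inr ⟨s, hs, h2, h1⟩
  loopless := ⟨fun u h => h.1 rfl⟩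

end RootedTreeDecomp

/-- `G` has treewidth at most `w`: it admits a (rooted) tree decomposition all of whose
bags are finite of cardinality at most `w + 1`. -/
def TreewidthLE.{u_tw} {V : Type*} (G : SimpleGraph V) (w : ℕ) : Prop :=
  ∃ (ι : Type u_tw) (D : RootedTreeDecomp V ι G),
    ∀ t : ι, (D.bag t).Finite ∧ (D.bag t).ncard ≤ w + 1

/-- `u` and `v` lie in the same connected component of `G[Z]`. -/
def ReachIn {V : Type*} (G : SimpleGraph V) (Z : Set V) (u v : V) : Prop :=
  ∃ (hu : u ∈ Z) (hv : v ∈ Z), (G.induce Z).Reachable ⟨u, hu⟩ ⟨v, hv⟩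

/-- `G'` is obtained from `G` by contracting edges, with quotient map `π` : `π` is
surjective, each fibre induces a connected subgraph of `G`, and two distinct vertices of
`G'` are adjacent exactly when some edge of `G` joins the corresponding fibres. -/
def IsContraction {V V' : Type*} (G : SimpleGraph V) (G' : SimpleGraph V') (π : V → V') :
    Prop :=
  Function.Surjective π ∧
  (∀ a : V', (G.induce (π ⁻¹' {a})).Connected) ∧
  (∀ a b : V', G'.Adj a b ↔ a ≠ b ∧ ∃ u v : V, G.Adj u v ∧ π u = a ∧ π v = b)

/-- `G'` is the graph `G/Z` obtained from `G` by contracting every connected component of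
`G[Z]` to a single vertex, with quotient map `π`: additionally to being a contraction, `π`
identifies two vertices exactly when they coincide or lie in the same connected component
of `G[Z]`. -/
def IsComponentContraction {V V' : Type*} (G : SimpleGraph V) (Z : Set V)
    (G' : SimpleGraph V') (π : V → V') : Prop :=
  Function.Surjective π ∧
  (∀ u v : V, π u = π v ↔ u = v ∨ ReachIn G Z u v) ∧
  (∀ a b : V', G'.Adj a b ↔ a ≠ b ∧ ∃ u v : V, G.Adj u v ∧ π u = a ∧ π v = b)

/-- Distance of natural numbers (`|a - b|`). -/
def natDist (a b : ℕ) : ℕ := max a b - min a b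

/-- The `k × k` grid graph together with two universal apex vertices `x = Sum.inr 0` and
`y = Sum.inr 1`, each adjacent to all grid vertices and to each other. -/
def gridApex (k : ℕ) : SimpleGraph ((Fin k × Fin k) ⊕ Fin 2) where
  Adj a b :=
    match a, b with
    | Sum.inl p, Sum.inl q => natDist p.1.val q.1.val + natDist p.2.val q.2.val = 1
    | Sum.inl _, Sum.inr _ => True
    | Sum.inr _, Sum.inl _ => True
    | Sum.inr i, Sum.inr j => i ≠ j
  symm := by
    constructor
    rintro (p | i) (q | j) h
    · simpa [natDist, Nat.max_comm, Nat.min_comm] using h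
    · trivial
    · trivial
    · exact h.symm
  loopless := by
    constructor
    rintro (p | i) h
    · simp [natDist] at h
    · exact h rfl

/-- The bipartition class `A` of the grid: grid vertices `(i,j)` with `i + j` even. -/
def gridEven (k : ℕ) : Set ((Fin k × Fin k) ⊕ Fin 2) :=
  {x | ∃ p : Fin k × Fin k, x = Sum.inl p ∧ (p.1.val + p.2.val) % 2 = 0}

/-- The bipartition class `B` of the grid: grid vertices `(i,j)` with `i + j` odd. -/
def gridOdd (k : ℕ) : Set ((Fin k × Fin k) ⊕ Fin 2) :=
  {x | ∃ p : Fin k × Fin k, x = Sum.inl p ∧ (p.1.val + p.2.val) % 2 = 1}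

/-- `Z₁ = A ∪ {x}`. -/
def Zone (k : ℕ) : Set ((Fin k × Fin k) ⊕ Fin 2) := gridEven k ∪ {Sum.inr 0}

/-- `Z₂ = B ∪ {y}`. -/
def Ztwo (k : ℕ) : Set ((Fin k × Fin k) ⊕ Fin 2) := gridOdd k ∪ {Sum.inr 1}

/-!
Since the even class `A` of the grid is independent, contracting the components of `G[A]`
changes nothing, so `G/(Z₁ \ {x}) ≅ G`.

For the lower bound, the crosses (row `i` ∪ column `j`) together with `{x}` form a bramble:
connected sets that pairwise touch. In a rooted tree decomposition, the nodes whose bags meet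
a connected set form a subtree hanging from a top node, and pairwise touching subtrees share
a node, so some bag meets every member of the bramble. A set meeting every cross contains a
vertex of every row or of every column, so that bag has at least `k` grid vertices besides `x`.
-/

universe u

namespace SimpleGraph

variable {V W : Type*} {G : SimpleGraph V}

def Touches (G : SimpleGraph V) (S T : Set V) : Prop :=
  ∃ u ∈ S, ∃ v ∈ T, u = v ∨ G.Adj u v

lemma Reachable.of_adj_imp {P : V → Prop} (hP : ∀ ⦃u v⦄, G.Adj u v → P u → P v) {u v : V}
    (h : G.Reachable u v) (hu : P u) : P v := by
  obtain ⟨p⟩ := h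
  induction p with
  | nil => exact hu
  | cons hadj _ ih => exact ih (hP hadj hu)

lemma Preconnected.induce_range {H : SimpleGraph W} (hH : H.Preconnected) (f : H →g G) :
    (G.induce (Set.range f)).Preconnected :=
  hH.map ⟨fun a => ⟨f a, a, rfl⟩, fun h => f.map_adj h⟩ (by rintro ⟨_, a, rfl⟩; exact ⟨a, rfl⟩)

end SimpleGraph

open SimpleGraph

namespace RootedTreeDecomp

variable {V ι : Type*} {G : SimpleGraph V}

def IsDescendant (D : RootedTreeDecomp V ι G) (a b : ι) : Prop := ∃ n, D.parent^[n] a = b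

open Classical in
noncomputable def depth (D : RootedTreeDecomp V ι G) (t : ι) : ℕ := Nat.find (D.reaches_root t)

variable {D : RootedTreeDecomp V ι G}

protected lemma IsDescendant.rfl {a : ι} : D.IsDescendant a a := ⟨0, rfl⟩

lemma IsDescendant.trans {a b c : ι} (hab : D.IsDescendant a b) (hbc : D.IsDescendant b c) :
    D.IsDescendant a c := by
  obtain ⟨m, rfl⟩ := hab
  obtain ⟨n, rfl⟩ := hbc
  exact ⟨n + m, Function.iterate_add_apply _ n m a⟩

lemma isDescendant_root (a : ι) : D.IsDescendant a D.root := D.reaches_root a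

lemma parent_iterate_depth (t : ι) : D.parent^[D.depth t] t = D.root := by
  classical exact Nat.find_spec (D.reaches_root t)

lemma depth_le_of_parent_iterate {t : ι} {n : ℕ} (h : D.parent^[n] t = D.root) :
    D.depth t ≤ n := by
  classical exact Nat.find_le h

lemma depth_parent {t : ι} (ht : t ≠ D.root) : D.depth (D.parent t) + 1 = D.depth t := by
  obtain ⟨m, hm⟩ : ∃ m, D.depth t = m + 1 :=
    Nat.exists_eq_succ_of_ne_zero fun h => ht (by simpa [h] using D.parent_iterate_depth t)
  have h₁ : D.parent^[m] (D.parent t) = D.root := by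
    simpa only [hm, Function.iterate_succ_apply] using D.parent_iterate_depth t
  have h₂ : D.parent^[D.depth (D.parent t) + 1] t = D.root := by
    rw [Function.iterate_succ_apply, parent_iterate_depth]
  have := depth_le_of_parent_iterate h₁
  have := depth_le_of_parent_iterate h₂
  omega

lemma depth_parent_le (t : ι) : D.depth (D.parent t) ≤ D.depth t := by
  by_cases ht : t = D.root
  · rw [ht, D.parent_root]
  · have := depth_parent ht
    omega

lemma IsDescendant.depth_le {a b : ι} (h : D.IsDescendant a b) : D.depth b ≤ D.depth a := by
  obtain ⟨n, rfl⟩ := h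
  induction n with
  | zero => rfl
  | succ n ih => exact (Function.iterate_succ_apply' D.parent n a ▸ depth_parent_le _).trans ih

lemma IsDescendant.exists_child {r t : ι} (h : D.IsDescendant r t) (hne : r ≠ t) :
    ∃ s, s ≠ D.root ∧ D.parent s = t ∧ D.IsDescendant r s := by
  obtain ⟨n, hn⟩ := h
  induction n with
  | zero => exact absurd hn hne
  | succ n ih =>
    by_cases hs : D.parent^[n] r = t
    · exact ih hs
    refine ⟨_, fun hroot => hs ?_, (Function.iterate_succ_apply' D.parent n r).symm.trans hn,
      ⟨n, rfl⟩⟩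
    rw [← hn, Function.iterate_succ_apply', hroot, D.parent_root]

lemma isDescendant_of_mem_bag {v : V} {s : ι} (hs : s ≠ D.root)
    (hv : v ∉ D.bag (D.parent s)) {r : ι} (hr : v ∈ D.bag r) (hrs : D.IsDescendant r s)
    {r' : ι} (hr' : v ∈ D.bag r') : D.IsDescendant r' s := by
  obtain ⟨n, hn⟩ := hrs
  induction n generalizing r with
  | zero => exact D.bag_conn v s (hn ▸ hr) hs hv r' hr'
  | succ n ih =>
    by_cases hp : v ∈ D.bag (D.parent r)
    · exact ih hp hn
    have hroot : r ≠ D.root := by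
      rintro rfl
      exact hp (by rwa [D.parent_root])
    exact IsDescendant.trans (D.bag_conn v r hr hroot hp r' hr') ⟨n + 1, hn⟩

lemma isDescendant_of_preconnected {B : Set V} (hB : (G.induce B).Preconnected) {s : ι}
    (hs : s ≠ D.root) (hBs : Disjoint B (D.bag (D.parent s))) {u : V} {r : ι} (hu : u ∈ B)
    (hur : u ∈ D.bag r) (hrs : D.IsDescendant r s) {v : V} {r' : ι} (hv : v ∈ B)
    (hvr' : v ∈ D.bag r') : D.IsDescendant r' s := by
  let P : B → Prop := fun w => ∀ r', w.1 ∈ D.bag r' → D.IsDescendant r' s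
  have hstep : ∀ ⦃w w' : B⦄, (G.induce B).Adj w w' → P w → P w' := by
    intro w w' hadj hw
    obtain ⟨r, hwr, hw'r⟩ := D.bag_edge hadj
    exact fun _ => isDescendant_of_mem_bag hs (Set.disjoint_left.mp hBs w'.2) hw'r (hw r hwr)
  exact (hB ⟨u, hu⟩ ⟨v, hv⟩).of_adj_imp hstep
    (fun _ => isDescendant_of_mem_bag hs (Set.disjoint_left.mp hBs hu) hur hrs) r' hvr'

lemma exists_top_of_connected {B : Set V} (hB : (G.induce B).Connected) :
    ∃ t, (B ∩ D.bag t).Nonempty ∧ ∀ r, (B ∩ D.bag r).Nonempty → D.IsDescendant r t := by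
  classical
  have hex : ∃ n, ∃ t, (B ∩ D.bag t).Nonempty ∧ D.depth t = n := by
    obtain ⟨v, hv⟩ := hB.nonempty
    obtain ⟨t, ht⟩ := D.bag_cover v
    exact ⟨_, t, ⟨v, hv, ht⟩, rfl⟩
  obtain ⟨t, ⟨u, huB, hut⟩, hdepth⟩ := Nat.find_spec hex
  refine ⟨t, ⟨u, huB, hut⟩, fun r ⟨v, hvB, hvr⟩ => ?_⟩
  by_cases hroot : t = D.root
  · exact hroot ▸ isDescendant_root r
  have hdisj : Disjoint B (D.bag (D.parent t)) := Set.disjoint_left.mpr fun w hwB hwp =>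
    Nat.find_min hex (by have := depth_parent hroot; omega) ⟨D.parent t, ⟨w, hwB, hwp⟩, rfl⟩
  exact isDescendant_of_preconnected hB.preconnected hroot hdisj huB hut .rfl hvB hvr

lemma exists_bag_meets_of_touches {S T : Set V} (h : G.Touches S T) :
    ∃ r, (S ∩ D.bag r).Nonempty ∧ (T ∩ D.bag r).Nonempty := by
  obtain ⟨u, hu, v, hv, rfl | hadj⟩ := h
  · obtain ⟨r, hr⟩ := D.bag_cover u
    exact ⟨r, ⟨u, hu, hr⟩, ⟨u, hv, hr⟩⟩
  · obtain ⟨r, hur, hvr⟩ := D.bag_edge hadj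
    exact ⟨r, ⟨u, hu, hur⟩, ⟨v, hv, hvr⟩⟩

variable (D) in
/-- Take the member of the bramble whose top node `t` is deepest. If a member `B` missed the
bag of `t`, the node where it touches that member lies strictly below `t`, so `B` would lie
below a child of `t` and its own top would be deeper than `t`. -/
theorem exists_bag_meets_bramble {β : Type*} [Finite β] [Nonempty β] (E : β → Set V)
    (hconn : ∀ b, (G.induce (E b)).Connected) (htouch : ∀ b b', G.Touches (E b) (E b')) :
    ∃ t, ∀ b, (E b ∩ D.bag t).Nonempty := by
  choose top htop_meets htop_above using fun b => D.exists_top_of_connected (hconn b)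
  obtain ⟨b₀, hb₀⟩ := Finite.exists_max fun b => D.depth (top b)
  refine ⟨top b₀, fun b => ?_⟩
  by_contra hmiss
  obtain ⟨r, ⟨u, huB, hur⟩, hrb₀⟩ := D.exists_bag_meets_of_touches (htouch b b₀)
  have hne : r ≠ top b₀ := by
    rintro rfl
    exact hmiss ⟨u, huB, hur⟩
  obtain ⟨s, hs, hst, hrs⟩ := (htop_above b₀ r hrb₀).exists_child hne
  have hdisj : Disjoint (E b) (D.bag (D.parent s)) := by
    rw [hst, Set.disjoint_iff_inter_eq_empty]
    exact Set.not_nonempty_iff_eq_empty.mp hmiss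
  obtain ⟨v, hvB, hvt⟩ := htop_meets b
  have hbelow := isDescendant_of_preconnected (hconn b).preconnected hs hdisj huB hur hrs hvB hvt
  have := hbelow.depth_le
  have := depth_parent hs
  have := hb₀ b
  rw [hst] at *
  omega

variable {V' : Type*} {G' : SimpleGraph V'}

def mapIso (D : RootedTreeDecomp V ι G) (e : G ≃g G') : RootedTreeDecomp V' ι G' where
  parent := D.parent
  root := D.root
  parent_root := D.parent_root
  reaches_root := D.reaches_root
  bag t := e.symm ⁻¹' D.bag t
  bag_cover v := D.bag_cover (e.symm v)
  bag_edge _ _ huv := D.bag_edge (e.symm.map_adj_iff.mpr huv)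
  bag_conn v := D.bag_conn (e.symm v)

end RootedTreeDecomp

lemma TreewidthLE.of_iso {V V' : Type*} {G : SimpleGraph V} {G' : SimpleGraph V'} (e : G ≃g G')
    {w : ℕ} (h : TreewidthLE.{u} G w) : TreewidthLE.{u} G' w := by
  obtain ⟨ι, D, hD⟩ := h
  refine ⟨ι, D.mapIso e, fun t => ⟨(hD t).1.preimage e.symm.injective.injOn, ?_⟩⟩
  rw [RootedTreeDecomp.mapIso, Set.ncard_preimage_of_injective_subset_range e.symm.injective
    (by simp [e.symm.surjective.range_eq])]
  exact (hD t).2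

section Contraction

variable {V V' : Type*} {G : SimpleGraph V} {Z : Set V} {G' : SimpleGraph V'} {π : V → V'}

lemma IsComponentContraction.injective (h : IsComponentContraction G Z G' π)
    (hZ : ∀ u v, u ∈ Z → v ∈ Z → ¬ G.Adj u v) : Function.Injective π := by
  intro u v huv
  obtain rfl | ⟨hu, hv, ⟨p⟩⟩ := (h.2.1 u v).mp huv
  · rfl
  cases p with
  | nil => rfl
  | cons hadj _ => exact absurd hadj (hZ _ _ hu (Subtype.prop _))

noncomputable def IsComponentContraction.isoOfEdgeless (h : IsComponentContraction G Z G' π)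
    (hZ : ∀ u v, u ∈ Z → v ∈ Z → ¬ G.Adj u v) : G ≃g G' where
  toEquiv := Equiv.ofBijective π ⟨h.injective hZ, h.1⟩
  map_rel_iff' {u v} := by
    change G'.Adj (π u) (π v) ↔ G.Adj u v
    rw [h.2.2, (h.injective hZ).ne_iff]
    constructor
    · rintro ⟨-, u', v', hadj, hu, hv⟩
      rwa [← h.injective hZ hu, ← h.injective hZ hv]
    · exact fun hadj => ⟨hadj.ne, u, v, hadj, rfl, rfl⟩

end Contraction

section Grid

variable {k : ℕ}

lemma gridApex_adj_inl_inl {p q : Fin k × Fin k} :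
    (gridApex k).Adj (Sum.inl p) (Sum.inl q) ↔
      natDist p.1.val q.1.val + natDist p.2.val q.2.val = 1 := Iff.rfl

lemma zone_diff_apex : Zone k \ {Sum.inr 0} = gridEven k := by
  ext v
  constructor
  · rintro ⟨hv | hv, hx⟩
    exacts [hv, absurd hv hx]
  · rintro ⟨p, rfl, hp⟩
    exact ⟨Or.inl ⟨p, rfl, hp⟩, Sum.inl_ne_inr⟩

lemma gridEven_not_adj {u v : (Fin k × Fin k) ⊕ Fin 2} (hu : u ∈ gridEven k)
    (hv : v ∈ gridEven k) : ¬ (gridApex k).Adj u v := by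
  obtain ⟨p, rfl, hp⟩ := hu
  obtain ⟨q, rfl, hq⟩ := hv
  rw [gridApex_adj_inl_inl, natDist, natDist]
  omega

def gridCross (k : ℕ) (i j : Fin k) : Set ((Fin k × Fin k) ⊕ Fin 2) :=
  Set.range (fun b => Sum.inl (i, b)) ∪ Set.range (fun a => Sum.inl (a, j))

lemma gridCross_connected (i j : Fin k) : ((gridApex k).induce (gridCross k i j)).Connected := by
  refine induce_union_connected ((pathGraph_preconnected k).induce_range ⟨_, fun h => ?_⟩)
    ((pathGraph_preconnected k).induce_range ⟨_, fun h => ?_⟩) ⟨Sum.inl (i, j), ⟨j, rfl⟩, i, rfl⟩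
  all_goals
    rw [pathGraph_adj] at h
    simp only [gridApex_adj_inl_inl, natDist]
    omega

/-- The crosses, indexed by `some (i, j)`, together with `{x}`, indexed by `none`. -/
def gridBramble (k : ℕ) : Option (Fin k × Fin k) → Set ((Fin k × Fin k) ⊕ Fin 2)
  | none => {Sum.inr 0}
  | some p => gridCross k p.1 p.2

lemma gridBramble_connected (b : Option (Fin k × Fin k)) :
    ((gridApex k).induce (gridBramble k b)).Connected := by
  cases b with
  | none => simp [gridBramble]
  | some p => exact gridCross_connected p.1 p.2

lemma gridBramble_touches (b b' : Option (Fin k × Fin k)) :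
    (gridApex k).Touches (gridBramble k b) (gridBramble k b') := by
  match b, b' with
  | none, none => exact ⟨_, rfl, _, rfl, Or.inl rfl⟩
  | none, some (i, j) => exact ⟨_, rfl, Sum.inl (i, j), Or.inl ⟨j, rfl⟩, Or.inr trivial⟩
  | some (i, j), none => exact ⟨Sum.inl (i, j), Or.inl ⟨j, rfl⟩, _, rfl, Or.inr trivial⟩
  | some (i, _), some (_, j) => exact ⟨Sum.inl (i, j), Or.inl ⟨j, rfl⟩, _, Or.inr ⟨i, rfl⟩, Or.inl rfl⟩

lemma le_ncard_of_forall_cross {S : Set (Fin k × Fin k)}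
    (hS : ∀ i j, ∃ p ∈ S, p.1 = i ∨ p.2 = j) : k ≤ S.ncard := by
  have hcover : ∀ f : Fin k × Fin k → Fin k, f '' S = Set.univ → k ≤ S.ncard := fun f hf => by
    simpa [hf] using Set.ncard_image_le (f := f) S.toFinite
  by_cases hrows : ∀ i, ∃ p ∈ S, p.1 = i
  · exact hcover Prod.fst (Set.eq_univ_of_forall hrows)
  push Not at hrows
  obtain ⟨i, hi⟩ := hrows
  refine hcover Prod.snd (Set.eq_univ_of_forall fun j => ?_)
  obtain ⟨p, hp, h | h⟩ := hS i j
  exacts [absurd h (hi p hp), ⟨p, hp, h⟩]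

lemma succ_le_ncard_of_meets_gridBramble {S : Set ((Fin k × Fin k) ⊕ Fin 2)} (hfin : S.Finite)
    (hS : ∀ b, (gridBramble k b ∩ S).Nonempty) : k + 1 ≤ S.ncard := by
  have hx : Sum.inr 0 ∈ S := by
    obtain ⟨_, rfl, hv⟩ := hS none
    exact hv
  have hgrid : k ≤ (Sum.inl ⁻¹' S).ncard := by
    refine le_ncard_of_forall_cross fun i j => ?_
    obtain ⟨_, ⟨b, rfl⟩ | ⟨a, rfl⟩, hv⟩ := hS (some (i, j))
    exacts [⟨_, hv, Or.inl rfl⟩, ⟨_, hv, Or.inr rfl⟩]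
  calc k + 1 ≤ (insert (Sum.inr 0) (Sum.inl '' (Sum.inl ⁻¹' S))).ncard := by
        rw [Set.ncard_insert_of_notMem (by simp), Set.ncard_image_of_injective _ Sum.inl_injective]
        omega
    _ ≤ S.ncard := Set.ncard_le_ncard
        (Set.insert_subset hx (Set.image_preimage_subset _ _)) hfin

theorem gridApex_le_of_treewidthLE {w : ℕ} (h : TreewidthLE (gridApex k) w) : k ≤ w := by
  obtain ⟨ι, D, hbags⟩ := h
  rcases k.eq_zero_or_pos with rfl | hk
  · exact Nat.zero_le w
  have : Nonempty (Fin k) := ⟨⟨0, hk⟩⟩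
  obtain ⟨t, ht⟩ :=
    D.exists_bag_meets_bramble (gridBramble k) gridBramble_connected gridBramble_touches
  have := succ_le_ncard_of_meets_gridBramble (hbags t).1 ht
  have := (hbags t).2
  omega

end Grid

/-- Let `G` be the `k × k` grid plus two universal vertices `x, y`, with
bipartition classes `A, B`, and `Z₁ := A ∪ {x}`.  Then `G[Z₁ \ {x}] = G[A]` has no edges,
so `G/(Z₁ \ {x})` is isomorphic to `G`, and hence `tw(G/(Z₁ \ {x})) ≥ k`. -/
theorem gridApex_contraction_minus_vertex
    (k : ℕ) :
    (∀ u v : (Fin k × Fin k) ⊕ Fin 2,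
        u ∈ Zone k \ {Sum.inr 0} → v ∈ Zone k \ {Sum.inr 0} → ¬ (gridApex k).Adj u v) ∧
    ∀ (V' : Type) (G' : SimpleGraph V') (π : ((Fin k × Fin k) ⊕ Fin 2) → V'),
      IsComponentContraction (gridApex k) (Zone k \ {Sum.inr 0}) G' π →
        Nonempty (G' ≃g gridApex k) ∧ ∀ w : ℕ, TreewidthLE G' w → k ≤ w := by
  have hedgeless : ∀ u v, u ∈ Zone k \ {Sum.inr 0} → v ∈ Zone k \ {Sum.inr 0} →
      ¬ (gridApex k).Adj u v := by
    rw [zone_diff_apex]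
    exact fun _ _ => gridEven_not_adj
  refine ⟨hedgeless, fun V' G' π hπ => ?_⟩
  let e := (hπ.isoOfEdgeless hedgeless).symm
  exact ⟨⟨e⟩, fun w hw => gridApex_le_of_treewidthLE (hw.of_iso e)⟩
end
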